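/- arXiv:2406.09189 — 5 statements merged into one kernel-verified Lean document; each statement's English description precedes it below -/
import Mathlib

section
/- Let u : ℝ × ℝ → ℝ be twice continuously differentiable, σ, r > 0, b ∈ ℝ, and let l, g : ℝ → ℝ be differentiable. Define T^t(x,t) = -u_x(x,t)·l(t) + a/x + (2b·u(x,t)/(σ²x))·e^{-rt} and T^x(x,t) = u_t(x,t)·l(t) + u(x,t)·l'(t) + g(t) - b·u(x,t)·e^{-rt} + b·(u_x(x,t) + 2r·u(x,t)/(σ²x))·x·e^{-rt}. Then for all x ≠ 0 and all t, D_t T^t + D_x T^x = (2b·e^{-rt}/(σ²x))·(u_t + (1/2)σ²x²·u_xx + r·x·u_x - r·u). -/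
open Real MeasureTheory

noncomputable def pdx (u : ℝ → ℝ → ℝ) (x t : ℝ) : ℝ := deriv (fun x' => u x' t) x
noncomputable def pdt (u : ℝ → ℝ → ℝ) (x t : ℝ) : ℝ := deriv (fun t' => u x t') t
noncomputable def pdxx (u : ℝ → ℝ → ℝ) (x t : ℝ) : ℝ := deriv (fun x' => pdx u x' t) x

/-!
Both conserved components are differentiated term by term. All terms carrying `l`, `l'` or `g`
cancel between `D_t T^t` and `D_x T^x` once the mixed partials `u_xt` and `u_tx` are identified
(Schwarz's theorem, which is where the `C²` hypothesis enters); what is left is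
`2 b e^{-rt} / (σ² x)` times the Black–Scholes operator applied to `u`.
-/

open Function

section Partials

variable {u : ℝ → ℝ → ℝ} {x t : ℝ}

lemma hasDerivAt_pdx (hu : DifferentiableAt ℝ (uncurry u) (x, t)) :
    HasDerivAt (fun x' => u x' t) (pdx u x t) x :=
  (hu.comp (g := uncurry u) (f := fun y => (y, t)) x
    (differentiableAt_id.prodMk (differentiableAt_const t))).hasDerivAt

lemma hasDerivAt_pdt (hu : DifferentiableAt ℝ (uncurry u) (x, t)) :
    HasDerivAt (fun t' => u x t') (pdt u x t) t :=
  (hu.comp (g := uncurry u) (f := fun y => (x, y)) t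
    ((differentiableAt_const x).prodMk differentiableAt_id)).hasDerivAt

lemma pdx_eq_fderiv (hu : DifferentiableAt ℝ (uncurry u) (x, t)) :
    pdx u x t = fderiv ℝ (uncurry u) (x, t) (1, 0) :=
  (hu.hasFDerivAt.comp_hasDerivAt (l := uncurry u) x
    ((hasDerivAt_id x).prodMk (hasDerivAt_const x t))).deriv

lemma pdt_eq_fderiv (hu : DifferentiableAt ℝ (uncurry u) (x, t)) :
    pdt u x t = fderiv ℝ (uncurry u) (x, t) (0, 1) :=
  (hu.hasFDerivAt.comp_hasDerivAt (l := uncurry u) t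
    ((hasDerivAt_const t x).prodMk (hasDerivAt_id t))).deriv

lemma uncurry_pdx (hu : Differentiable ℝ (uncurry u)) :
    uncurry (pdx u) = fun p => fderiv ℝ (uncurry u) p (1, 0) :=
  funext fun _ => pdx_eq_fderiv (hu _)

lemma uncurry_pdt (hu : Differentiable ℝ (uncurry u)) :
    uncurry (pdt u) = fun p => fderiv ℝ (uncurry u) p (0, 1) :=
  funext fun _ => pdt_eq_fderiv (hu _)

lemma pdxx_eq_pdx_pdx : pdxx u = pdx (pdx u) := rfl

lemma contDiff_uncurry_pdx {n : WithTop ℕ∞} (hu : ContDiff ℝ (n + 1) (uncurry u)) :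
    ContDiff ℝ n (uncurry (pdx u)) := by
  rw [uncurry_pdx (hu.differentiable (by simp))]
  exact (hu.fderiv_right le_rfl).clm_apply contDiff_const

lemma contDiff_uncurry_pdt {n : WithTop ℕ∞} (hu : ContDiff ℝ (n + 1) (uncurry u)) :
    ContDiff ℝ n (uncurry (pdt u)) := by
  rw [uncurry_pdt (hu.differentiable (by simp))]
  exact (hu.fderiv_right le_rfl).clm_apply contDiff_const

lemma pdt_pdx (hu : ContDiff ℝ 2 (uncurry u)) : pdt (pdx u) x t = pdx (pdt u) x t := by
  have hF : Differentiable ℝ (uncurry u) := hu.differentiable (by simp)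
  have hF' : Differentiable ℝ (fderiv ℝ (uncurry u)) :=
    (hu.fderiv_right (m := 1) (by norm_num)).differentiable (by simp)
  have hx := (contDiff_uncurry_pdx (n := 1) hu).differentiable (by simp) (x, t)
  have ht := (contDiff_uncurry_pdt (n := 1) hu).differentiable (by simp) (x, t)
  rw [pdt_eq_fderiv hx, pdx_eq_fderiv ht, uncurry_pdx hF, uncurry_pdt hF,
    ((hF' _).hasFDerivAt.clm_apply (hasFDerivAt_const _ _)).fderiv,
    ((hF' _).hasFDerivAt.clm_apply (hasFDerivAt_const _ _)).fderiv]
  simpa using ((hu.contDiffAt (x := (x, t))).isSymmSndFDerivAt (by simp)) (0, 1) (1, 0)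

end Partials

theorem stmt0_general (u : ℝ → ℝ → ℝ) (hu : ContDiff ℝ 2 (Function.uncurry u))
    (σ r a b : ℝ) (hσ : 0 < σ)
    (l g : ℝ → ℝ) (hl : Differentiable ℝ l) :
    ∀ x : ℝ, x ≠ 0 → ∀ t : ℝ,
      pdt (fun x' t' => -pdx u x' t' * l t' + a / x'
            + (2 * b * u x' t' / (σ ^ 2 * x')) * Real.exp (-r * t')) x t
      + pdx (fun x' t' => pdt u x' t' * l t' + u x' t' * deriv l t' + g t'
            - b * u x' t' * Real.exp (-r * t')
            + b * (pdx u x' t' + 2 * r * u x' t' / (σ ^ 2 * x')) * x' * Real.exp (-r * t')) x t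
      = (2 * b * Real.exp (-r * t) / (σ ^ 2 * x))
        * (pdt u x t + (1 / 2) * σ ^ 2 * x ^ 2 * pdxx u x t + r * x * pdx u x t - r * u x t) := by
  intro x hx t
  have hu₀ : Differentiable ℝ (uncurry u) := hu.differentiable (by simp)
  have hux : Differentiable ℝ (uncurry (pdx u)) :=
    (contDiff_uncurry_pdx (n := 1) hu).differentiable (by simp)
  have hut : Differentiable ℝ (uncurry (pdt u)) :=
    (contDiff_uncurry_pdt (n := 1) hu).differentiable (by simp)
  have hexp : HasDerivAt (fun t' => exp (-r * t')) (exp (-r * t) * (-r)) t := by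
    simpa using ((hasDerivAt_id t).const_mul (-r)).exp
  have hTt := (((hasDerivAt_pdt (hux (x, t))).neg.mul (hl t).hasDerivAt).add_const (a / x)).add
    ((((hasDerivAt_pdt (hu₀ (x, t))).const_mul (2 * b)).div_const (σ ^ 2 * x)).mul hexp)
  have hquot := ((hasDerivAt_pdx (hu₀ (x, t))).const_mul (2 * r)).div
    ((hasDerivAt_id x).const_mul (σ ^ 2)) (mul_ne_zero (by positivity) hx)
  have hTx := (((((hasDerivAt_pdx (hut (x, t))).mul_const (l t)).add
    ((hasDerivAt_pdx (hu₀ (x, t))).mul_const (deriv l t))).add_const (g t)).sub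
    (((hasDerivAt_pdx (hu₀ (x, t))).const_mul b).mul_const (exp (-r * t)))).add
    (((((hasDerivAt_pdx (hux (x, t))).add hquot).const_mul b).mul (hasDerivAt_id x)).mul_const
      (exp (-r * t)))
  -- `rw` cannot find the combinator-built functions in the goal; unification up to defeq can.
  refine (congrArg₂ (· + ·) hTt.deriv hTx.deriv).trans ?_
  rw [pdt_pdx hu, pdxx_eq_pdx_pdx]
  simp only [Pi.add_apply, Pi.div_apply, Pi.neg_apply, id]
  field_simp
  ring

theorem stmt0 (u : ℝ → ℝ → ℝ) (hu : ContDiff ℝ 2 (Function.uncurry u))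
    (σ r a b : ℝ) (hσ : 0 < σ) (hr : 0 < r)
    (l g : ℝ → ℝ) (hl : Differentiable ℝ l) (hg : Differentiable ℝ g) :
    ∀ x : ℝ, x ≠ 0 → ∀ t : ℝ,
      pdt (fun x' t' => -pdx u x' t' * l t' + a / x'
            + (2 * b * u x' t' / (σ ^ 2 * x')) * Real.exp (-r * t')) x t
      + pdx (fun x' t' => pdt u x' t' * l t' + u x' t' * deriv l t' + g t'
            - b * u x' t' * Real.exp (-r * t')
            + b * (pdx u x' t' + 2 * r * u x' t' / (σ ^ 2 * x')) * x' * Real.exp (-r * t')) x t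
      = (2 * b * Real.exp (-r * t) / (σ ^ 2 * x))
        * (pdt u x t + (1 / 2) * σ ^ 2 * x ^ 2 * pdxx u x t + r * x * pdx u x t - r * u x t) :=
  stmt0_general u hu σ r a b hσ l g hl
end

section
/- Let K > 0, r ∈ ℝ, σ > 0, T > 0. Define d₁(x,t) = (ln(x/K) + (r + σ²/2)(T−t))/(σ√(T−t)), d₂(x,t) = d₁(x,t) − σ√(T−t), and u(x,t) = x·N(d₁(x,t)) − K·e^{−r(T−t)}·N(d₂(x,t)), where N is the standard normal CDF. Then for all x > 0 and t < T, u satisfies the Black-Scholes equation u_t + (1/2)σ²x²u_xx + r·x·u_x − r·u = 0. -/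
/-!
Write `τ = T - t`, `d₂ = d₁ - σ√τ` and `φ = N'`. Completing the square gives
`x φ(d₁) = K e^{-rτ} φ(d₂)`, which makes the chain-rule terms in `d₁'` cancel when differentiating
`u`. This leaves `u_x = N(d₁)`, `u_xx = φ(d₁) / (x σ √τ)` and
`u_t = -σ x φ(d₁) / (2√τ) - r K e^{-rτ} N(d₂)`, and in the equation the `φ` terms and the `N` terms
then cancel separately.
-/

open Real MeasureTheory

noncomputable def stdNormalCDF (z : ℝ) : ℝ :=
  (Real.sqrt (2 * Real.pi))⁻¹ * ∫ s in Set.Iic z, Real.exp (-(s ^ 2) / 2)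

noncomputable def stdNormalPDF (z : ℝ) : ℝ := (√(2 * π))⁻¹ * exp (-(z ^ 2) / 2)

lemma integrable_exp_neg_sq_div_two : Integrable fun s : ℝ => exp (-(s ^ 2) / 2) := by
  convert integrable_exp_neg_mul_sq (show (0 : ℝ) < 1 / 2 by norm_num) using 2 with s
  ring_nf

lemma hasDerivAt_stdNormalCDF (z : ℝ) : HasDerivAt stdNormalCDF (stdNormalPDF z) z := by
  have hint := integrable_exp_neg_sq_div_two
  have hcont : Continuous fun s : ℝ => exp (-(s ^ 2) / 2) := by fun_prop
  have hsplit : ∀ w, stdNormalCDF w = (√(2 * π))⁻¹ *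
      ((∫ s in Set.Iic 0, exp (-(s ^ 2) / 2)) + ∫ s in (0 : ℝ)..w, exp (-(s ^ 2) / 2)) := by
    intro w
    rw [stdNormalCDF, ← intervalIntegral.integral_Iic_sub_Iic hint.integrableOn hint.integrableOn]
    ring
  have hFTC : HasDerivAt (fun w => ∫ s in (0 : ℝ)..w, exp (-(s ^ 2) / 2)) (exp (-(z ^ 2) / 2)) z :=
    intervalIntegral.integral_hasDerivAt_right hint.intervalIntegrable
      (hcont.stronglyMeasurableAtFilter _ _) hcont.continuousAt
  exact ((hFTC.const_add _).const_mul _).congr_of_eventuallyEq (.of_forall hsplit)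

lemma stdNormalPDF_sub (z s : ℝ) :
    stdNormalPDF (z - s) = stdNormalPDF z * exp (z * s - s ^ 2 / 2) := by
  rw [stdNormalPDF, stdNormalPDF, mul_assoc, ← exp_add]
  ring_nf

namespace BlackScholes

variable (K r σ T : ℝ)

noncomputable def d₁ (x t : ℝ) : ℝ := (log (x / K) + (r + σ ^ 2 / 2) * (T - t)) / (σ * √(T - t))

noncomputable def d₂ (x t : ℝ) : ℝ := d₁ K r σ T x t - σ * √(T - t)

noncomputable def callPrice (x t : ℝ) : ℝ :=
  x * stdNormalCDF (d₁ K r σ T x t) - K * exp (-r * (T - t)) * stdNormalCDF (d₂ K r σ T x t)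

variable {K r σ T}

lemma d₁_mul_sub_sq {x t : ℝ} (hσ : σ ≠ 0) (ht : t < T) :
    d₁ K r σ T x t * (σ * √(T - t)) - (σ * √(T - t)) ^ 2 / 2 = log (x / K) + r * (T - t) := by
  have hτ : 0 < T - t := sub_pos.2 ht
  have hvol : σ * √(T - t) ≠ 0 := mul_ne_zero hσ (sqrt_pos.2 hτ).ne'
  rw [d₁, div_mul_cancel₀ _ hvol, mul_pow, sq_sqrt hτ.le]
  ring

lemma mul_stdNormalPDF_d₁ {x t : ℝ} (hx : 0 < x) (hK : 0 < K) (hσ : σ ≠ 0) (ht : t < T) :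
    x * stdNormalPDF (d₁ K r σ T x t) = K * exp (-r * (T - t)) * stdNormalPDF (d₂ K r σ T x t) := by
  rw [d₂, stdNormalPDF_sub, d₁_mul_sub_sq hσ ht, exp_add, exp_log (div_pos hx hK), neg_mul,
    exp_neg]
  field_simp

lemma hasDerivAt_d₁_spot {x t : ℝ} (hx : x ≠ 0) (hK : K ≠ 0) :
    HasDerivAt (fun x' => d₁ K r σ T x' t) (1 / (x * (σ * √(T - t)))) x := by
  have hlog : HasDerivAt (fun x' => log (x' / K)) (1 / x) x :=
    (((hasDerivAt_id' x).div_const K).log (div_ne_zero hx hK)).congr_deriv (by field_simp)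
  have := (hlog.add_const ((r + σ ^ 2 / 2) * (T - t))).div_const (σ * √(T - t))
  rwa [div_div] at this

lemma hasDerivAt_callPrice_spot {x t : ℝ} (hx : 0 < x) (hK : 0 < K) (hσ : σ ≠ 0) (ht : t < T) :
    HasDerivAt (fun x' => callPrice K r σ T x' t) (stdNormalCDF (d₁ K r σ T x t)) x := by
  have hd₁ := hasDerivAt_d₁_spot (r := r) (σ := σ) (T := T) (t := t) hx.ne' hK.ne'
  have hN₁ := (hasDerivAt_stdNormalCDF _).comp x hd₁
  have hN₂ := (hasDerivAt_stdNormalCDF _).comp x (hd₁.sub_const (σ * √(T - t)))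
  refine (((hasDerivAt_id x).mul hN₁).sub (hN₂.const_mul (K * exp (-r * (T - t))))).congr_deriv ?_
  simp only [Function.comp_apply, id, one_mul, ← d₂.eq_def]
  linear_combination (1 / (x * (σ * √(T - t)))) * mul_stdNormalPDF_d₁ hx hK hσ ht

lemma pdx_callPrice {x t : ℝ} (hx : 0 < x) (hK : 0 < K) (hσ : σ ≠ 0) (ht : t < T) :
    pdx (callPrice K r σ T) x t = stdNormalCDF (d₁ K r σ T x t) :=
  (hasDerivAt_callPrice_spot hx hK hσ ht).deriv

lemma pdxx_callPrice {x t : ℝ} (hx : 0 < x) (hK : 0 < K) (hσ : σ ≠ 0) (ht : t < T) :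
    pdxx (callPrice K r σ T) x t = stdNormalPDF (d₁ K r σ T x t) / (x * (σ * √(T - t))) := by
  have hdelta : (fun y => pdx (callPrice K r σ T) y t) =ᶠ[nhds x]
      fun y => stdNormalCDF (d₁ K r σ T y t) := by
    filter_upwards [eventually_gt_nhds hx] with y hy using pdx_callPrice hy hK hσ ht
  rw [pdxx, hdelta.deriv_eq]
  exact ((hasDerivAt_stdNormalCDF _).comp x (hasDerivAt_d₁_spot hx.ne' hK.ne')).deriv.trans
    (mul_one_div _ _)

lemma hasDerivAt_vol_time {t : ℝ} (ht : t < T) :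
    HasDerivAt (fun t' => σ * √(T - t')) (-(σ / (2 * √(T - t)))) t := by
  have hτ : HasDerivAt (fun t' : ℝ => T - t') (-1) t := (hasDerivAt_id' t).const_sub T
  exact ((hτ.sqrt (sub_pos.2 ht).ne').const_mul σ).congr_deriv (by ring)

lemma pdt_callPrice {x t : ℝ} (hx : 0 < x) (hK : 0 < K) (hσ : σ ≠ 0) (ht : t < T) :
    pdt (callPrice K r σ T) x t = -(σ * x * stdNormalPDF (d₁ K r σ T x t)) / (2 * √(T - t))
      - r * K * exp (-r * (T - t)) * stdNormalCDF (d₂ K r σ T x t) := by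
  have hvol := hasDerivAt_vol_time (σ := σ) ht
  obtain ⟨d₁', hd₁⟩ : ∃ d₁', HasDerivAt (fun t' => d₁ K r σ T x t') d₁' t := by
    refine ⟨_, (((hasDerivAt_id t).const_sub T).const_mul _ |>.const_add _).div hvol ?_⟩
    exact mul_ne_zero hσ (sqrt_pos.2 (sub_pos.2 ht)).ne'
  have hdisc : HasDerivAt (fun t' => exp (-r * (T - t'))) (exp (-r * (T - t)) * r) t :=
    (((hasDerivAt_id' t).const_sub T).const_mul (-r)).exp.congr_deriv (by ring)
  have hN₁ := (hasDerivAt_stdNormalCDF _).comp t hd₁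
  have hN₂ := (hasDerivAt_stdNormalCDF _).comp t (hd₁.sub hvol)
  rw [pdt]
  refine ((hN₁.const_mul x).sub ((hdisc.const_mul K).mul hN₂)).deriv.trans ?_
  simp only [Function.comp_apply, Pi.sub_apply, ← d₂.eq_def]
  -- the `d₁'` terms cancel by `x φ(d₁) = K e^{-rτ} φ(d₂)`
  linear_combination (d₁' + σ / (2 * √(T - t))) * mul_stdNormalPDF_d₁ hx hK hσ ht

end BlackScholes

theorem stmt5_general (K r σ T : ℝ) (hK : 0 < K) (hσ : 0 < σ) :
    ∀ x : ℝ, 0 < x → ∀ t : ℝ, t < T →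
      pdt (fun x' t' =>
          x' * stdNormalCDF ((Real.log (x' / K) + (r + σ ^ 2 / 2) * (T - t')) / (σ * Real.sqrt (T - t')))
          - K * Real.exp (-r * (T - t'))
            * stdNormalCDF ((Real.log (x' / K) + (r + σ ^ 2 / 2) * (T - t')) / (σ * Real.sqrt (T - t'))
                - σ * Real.sqrt (T - t'))) x t
      + (1 / 2) * σ ^ 2 * x ^ 2 * pdxx (fun x' t' =>
          x' * stdNormalCDF ((Real.log (x' / K) + (r + σ ^ 2 / 2) * (T - t')) / (σ * Real.sqrt (T - t')))
          - K * Real.exp (-r * (T - t'))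
            * stdNormalCDF ((Real.log (x' / K) + (r + σ ^ 2 / 2) * (T - t')) / (σ * Real.sqrt (T - t'))
                - σ * Real.sqrt (T - t'))) x t
      + r * x * pdx (fun x' t' =>
          x' * stdNormalCDF ((Real.log (x' / K) + (r + σ ^ 2 / 2) * (T - t')) / (σ * Real.sqrt (T - t')))
          - K * Real.exp (-r * (T - t'))
            * stdNormalCDF ((Real.log (x' / K) + (r + σ ^ 2 / 2) * (T - t')) / (σ * Real.sqrt (T - t'))
                - σ * Real.sqrt (T - t'))) x t
      - r * (x * stdNormalCDF ((Real.log (x / K) + (r + σ ^ 2 / 2) * (T - t)) / (σ * Real.sqrt (T - t)))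
          - K * Real.exp (-r * (T - t))
            * stdNormalCDF ((Real.log (x / K) + (r + σ ^ 2 / 2) * (T - t)) / (σ * Real.sqrt (T - t))
                - σ * Real.sqrt (T - t)))
      = 0 := by
  intro x hx t ht
  let u := BlackScholes.callPrice K r σ T
  change pdt u x t + 1 / 2 * σ ^ 2 * x ^ 2 * pdxx u x t + r * x * pdx u x t - r * u x t = 0
  have hvol : 0 < √(T - t) := sqrt_pos.2 (sub_pos.2 ht)
  rw [BlackScholes.pdt_callPrice hx hK hσ.ne' ht, BlackScholes.pdxx_callPrice hx hK hσ.ne' ht,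
    BlackScholes.pdx_callPrice hx hK hσ.ne' ht]
  simp only [u, BlackScholes.callPrice]
  field_simp
  ring

theorem stmt5 (K r σ T : ℝ) (hK : 0 < K) (hσ : 0 < σ) (hT : 0 < T) :
    ∀ x : ℝ, 0 < x → ∀ t : ℝ, t < T →
      pdt (fun x' t' =>
          x' * stdNormalCDF ((Real.log (x' / K) + (r + σ ^ 2 / 2) * (T - t')) / (σ * Real.sqrt (T - t')))
          - K * Real.exp (-r * (T - t'))
            * stdNormalCDF ((Real.log (x' / K) + (r + σ ^ 2 / 2) * (T - t')) / (σ * Real.sqrt (T - t'))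
                - σ * Real.sqrt (T - t'))) x t
      + (1 / 2) * σ ^ 2 * x ^ 2 * pdxx (fun x' t' =>
          x' * stdNormalCDF ((Real.log (x' / K) + (r + σ ^ 2 / 2) * (T - t')) / (σ * Real.sqrt (T - t')))
          - K * Real.exp (-r * (T - t'))
            * stdNormalCDF ((Real.log (x' / K) + (r + σ ^ 2 / 2) * (T - t')) / (σ * Real.sqrt (T - t'))
                - σ * Real.sqrt (T - t'))) x t
      + r * x * pdx (fun x' t' =>
          x' * stdNormalCDF ((Real.log (x' / K) + (r + σ ^ 2 / 2) * (T - t')) / (σ * Real.sqrt (T - t')))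
          - K * Real.exp (-r * (T - t'))
            * stdNormalCDF ((Real.log (x' / K) + (r + σ ^ 2 / 2) * (T - t')) / (σ * Real.sqrt (T - t'))
                - σ * Real.sqrt (T - t'))) x t
      - r * (x * stdNormalCDF ((Real.log (x / K) + (r + σ ^ 2 / 2) * (T - t)) / (σ * Real.sqrt (T - t)))
          - K * Real.exp (-r * (T - t))
            * stdNormalCDF ((Real.log (x / K) + (r + σ ^ 2 / 2) * (T - t)) / (σ * Real.sqrt (T - t))
                - σ * Real.sqrt (T - t)))
      = 0 :=
  stmt5_general K r σ T hK hσ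
end

section
/- Let λ > 0, α > 0, γ ∈ ℝ, β ∈ ℝ, and let ν(x,t) = e^{pt + qx} with q = −γ/λ and p = αq² − λβq + λ. Then ν satisfies the adjoint Vašíček equation ν_t − α·ν_xx − λ(x − β)·ν_x − (λ + γx)·ν = 0 for all (x,t) ∈ ℝ². -/
open Real MeasureTheory

lemma deriv_exp_aff (a b y : ℝ) :
    deriv (fun y' => Real.exp (a + b * y')) y = b * Real.exp (a + b * y) := by
  have h : HasDerivAt (fun y' => Real.exp (a + b * y')) (b * Real.exp (a + b * y)) y := by
    have h1 : HasDerivAt (fun y' => a + b * y') b y := by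
      simpa using ((hasDerivAt_id y).const_mul b).const_add a
    simpa [mul_comm] using h1.exp
  exact h.deriv

lemma deriv_exp_aff' (a b y : ℝ) :
    deriv (fun y' => Real.exp (b * y' + a)) y = b * Real.exp (b * y + a) := by
  simpa [add_comm] using deriv_exp_aff a b y

theorem stmt14 (lam α γ β : ℝ) (hlam : 0 < lam) (hα : 0 < α) :
    ∀ x t : ℝ,
      pdt (fun x' t' => Real.exp ((α * (-γ / lam) ^ 2 - lam * β * (-γ / lam) + lam) * t'
            + (-γ / lam) * x')) x t
      - α * pdxx (fun x' t' => Real.exp ((α * (-γ / lam) ^ 2 - lam * β * (-γ / lam) + lam) * t'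
            + (-γ / lam) * x')) x t
      - lam * (x - β) * pdx (fun x' t' => Real.exp ((α * (-γ / lam) ^ 2 - lam * β * (-γ / lam) + lam) * t'
            + (-γ / lam) * x')) x t
      - (lam + γ * x) * Real.exp ((α * (-γ / lam) ^ 2 - lam * β * (-γ / lam) + lam) * t
            + (-γ / lam) * x)
      = 0 := by
  intro x t
  set q : ℝ := -γ / lam with hq
  set p : ℝ := α * q ^ 2 - lam * β * q + lam with hp
  have hx : ∀ x', pdx (fun x' t' => Real.exp (p * t' + q * x')) x' t
      = q * Real.exp (p * t + q * x') := by
    intro x'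
    simpa [pdx] using deriv_exp_aff (p * t) q x'
  have hxx : pdxx (fun x' t' => Real.exp (p * t' + q * x')) x t
      = q * (q * Real.exp (p * t + q * x)) := by
    rw [pdxx]
    rw [funext hx, deriv_const_mul_field, deriv_exp_aff (p * t) q x]
  have ht : pdt (fun x' t' => Real.exp (p * t' + q * x')) x t
      = p * Real.exp (p * t + q * x) := by
    simpa [pdt] using deriv_exp_aff' (q * x) p t
  rw [ht, hxx, hx]
  have hqγ : lam * q = -γ := by rw [hq]; field_simp
  have : p - α * (q * q) - lam * (x - β) * q - (lam + γ * x) = 0 := by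
    have : lam * q * x = -γ * x := by rw [hqγ]
    nlinarith [this, hp]
  nlinarith [this, Real.exp_pos (p * t + q * x)]
end

section
/- Let u and ν be smooth functions on ℝ², with u solving the Vašíček equation u_t + α·u_xx + λ(β−x)·u_x + γxu = 0 and ν solving the adjoint equation ν_t − α·ν_xx − λ(x−β)·ν_x − (λ+γx)·ν = 0, where α, λ > 0, β, γ ∈ ℝ. Define T^t = u·ν and T^x = α·u_x·ν − u·(λ(x−β)·ν + α·ν_x). Then D_t T^t + D_x T^x = 0 everywhere. -/
open Real MeasureTheory

lemma hasDerivAt_pdx_s15 {f : ℝ → ℝ → ℝ} (hf : ContDiff ℝ (⊤ : ℕ∞) (Function.uncurry f)) (x t : ℝ) :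
    HasDerivAt (fun x' => f x' t) (pdx f x t) x := by
  have h1 : DifferentiableAt ℝ (fun x' => f x' t) x := by
    have := (hf.differentiable (by simp)).comp
      ((differentiable_id (𝕜 := ℝ) (E := ℝ)).prodMk (differentiable_const t))
    exact this.differentiableAt
  exact h1.hasDerivAt

lemma hasDerivAt_pdt_s15 {f : ℝ → ℝ → ℝ} (hf : ContDiff ℝ (⊤ : ℕ∞) (Function.uncurry f)) (x t : ℝ) :
    HasDerivAt (fun t' => f x t') (pdt f x t) t := by
  have h1 : DifferentiableAt ℝ (fun t' => f x t') t := by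
    have := (hf.differentiable (by simp)).comp
      ((differentiable_const x).prodMk (differentiable_id (𝕜 := ℝ) (E := ℝ)))
    exact this.differentiableAt
  exact h1.hasDerivAt

lemma pdx_eq_fderiv_s15 {f : ℝ → ℝ → ℝ} (hf : ContDiff ℝ (⊤ : ℕ∞) (Function.uncurry f)) (x t : ℝ) :
    pdx f x t = fderiv ℝ (Function.uncurry f) (x, t) (1, 0) := by
  have hc : HasDerivAt (fun x' : ℝ => (x', t)) ((1 : ℝ), (0 : ℝ)) x :=
    (hasDerivAt_id x).prodMk (hasDerivAt_const x t)
  have hF : HasFDerivAt (Function.uncurry f) (fderiv ℝ (Function.uncurry f) (x, t)) (x, t) :=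
    ((hf.differentiable (by simp)) (x, t)).hasFDerivAt
  have := hF.comp_hasDerivAt x hc
  exact this.deriv.symm ▸ rfl

lemma contDiff_pdx {f : ℝ → ℝ → ℝ} (hf : ContDiff ℝ (⊤ : ℕ∞) (Function.uncurry f)) :
    ContDiff ℝ (⊤ : ℕ∞) (Function.uncurry (pdx f)) := by
  have h : Function.uncurry (pdx f) =
      fun p : ℝ × ℝ => fderiv ℝ (Function.uncurry f) p ((1 : ℝ), (0 : ℝ)) := by
    ext p
    exact pdx_eq_fderiv_s15 hf p.1 p.2
  rw [h]
  exact (hf.fderiv_right (by simp)).clm_apply contDiff_const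

theorem stmt15 (α lam β γ : ℝ) (hα : 0 < α) (hlam : 0 < lam)
    (u ν : ℝ → ℝ → ℝ)
    (hu : ContDiff ℝ (⊤ : ℕ∞) (Function.uncurry u)) (hν : ContDiff ℝ (⊤ : ℕ∞) (Function.uncurry ν))
    (hsolu : ∀ x t : ℝ,
      pdt u x t + α * pdxx u x t + lam * (β - x) * pdx u x t + γ * x * u x t = 0)
    (hsolν : ∀ x t : ℝ,
      pdt ν x t - α * pdxx ν x t - lam * (x - β) * pdx ν x t - (lam + γ * x) * ν x t = 0) :
    ∀ x t : ℝ,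
      pdt (fun x' t' => u x' t' * ν x' t') x t
      + pdx (fun x' t' => α * pdx u x' t' * ν x' t'
          - u x' t' * (lam * (x' - β) * ν x' t' + α * pdx ν x' t')) x t
      = 0 := by
  intro x t
  have hpu := contDiff_pdx hu
  have hpν := contDiff_pdx hν
  have hux := hasDerivAt_pdx_s15 hu x t
  have hνx := hasDerivAt_pdx_s15 hν x t
  have hut := hasDerivAt_pdt_s15 hu x t
  have hνt := hasDerivAt_pdt_s15 hν x t
  have huxx : HasDerivAt (fun x' => pdx u x' t) (pdxx u x t) x := hasDerivAt_pdx_s15 hpu x t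
  have hνxx : HasDerivAt (fun x' => pdx ν x' t) (pdxx ν x t) x := hasDerivAt_pdx_s15 hpν x t
  have Ht : HasDerivAt (fun t' => u x t' * ν x t')
      (pdt u x t * ν x t + u x t * pdt ν x t) t := hut.mul hνt
  have Hlin : HasDerivAt (fun x' : ℝ => lam * (x' - β)) (lam * 1) x :=
    ((hasDerivAt_id x).sub_const β).const_mul lam
  have Hx : HasDerivAt (fun x' => α * pdx u x' t * ν x' t
        - u x' t * (lam * (x' - β) * ν x' t + α * pdx ν x' t))
      ((α * pdxx u x t * ν x t + α * pdx u x t * pdx ν x t)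
        - (pdx u x t * (lam * (x - β) * ν x t + α * pdx ν x t)
          + u x t * ((lam * 1 * ν x t + lam * (x - β) * pdx ν x t) + α * pdxx ν x t))) x :=
    ((huxx.const_mul α).mul hνx).sub
      (hux.mul ((Hlin.mul hνx).add (hνxx.const_mul α)))
  have egoal : pdt (fun x' t' => u x' t' * ν x' t') x t
      + pdx (fun x' t' => α * pdx u x' t' * ν x' t'
          - u x' t' * (lam * (x' - β) * ν x' t' + α * pdx ν x' t')) x t
      = (pdt u x t * ν x t + u x t * pdt ν x t)
        + ((α * pdxx u x t * ν x t + α * pdx u x t * pdx ν x t)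
        - (pdx u x t * (lam * (x - β) * ν x t + α * pdx ν x t)
          + u x t * ((lam * 1 * ν x t + lam * (x - β) * pdx ν x t) + α * pdxx ν x t))) := by
    rw [pdt, pdx, Ht.deriv, Hx.deriv]
  rw [egoal]
  linear_combination (ν x t) * hsolu x t + (u x t) * hsolν x t
end

section
/- Let σ > 0, r ∈ ℝ, Z = r − σ²/2, and let u : (0,∞) × (0,∞) → ℝ be a smooth solution of the Black-Scholes equation u_t + (1/2)σ²x²u_xx + rxu_x − ru = 0. Then the function w(x,t) = 2t·u_t(x,t) + (ln x + Z·t)·x·u_x(x,t) − 2rt·u(x,t) satisfies the same Black-Scholes equation wherever u is smooth. -/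
open Real MeasureTheory Set Function

private lemma bsOpen : IsOpen ((Ioi (0:ℝ)) ×ˢ (Ioi (0:ℝ))) := isOpen_Ioi.prod isOpen_Ioi

variable {v : ℝ → ℝ → ℝ} {x t : ℝ}

private lemma bs_mem (hx : 0 < x) (ht : 0 < t) : (x, t) ∈ (Ioi (0:ℝ)) ×ˢ (Ioi (0:ℝ)) :=
  ⟨hx, ht⟩

private lemma bs_hx {F : ℝ × ℝ → ℝ} (hF : DifferentiableAt ℝ F (x, t)) :
    HasDerivAt (fun x' => F (x', t)) (fderiv ℝ F (x, t) (1, 0)) x := by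
  have h1 : HasDerivAt (fun x' : ℝ => (x', t)) ((1:ℝ), (0:ℝ)) x :=
    (hasDerivAt_id x).prodMk (hasDerivAt_const x t)
  exact hF.hasFDerivAt.comp_hasDerivAt x h1

private lemma bs_ht {F : ℝ × ℝ → ℝ} (hF : DifferentiableAt ℝ F (x, t)) :
    HasDerivAt (fun t' => F (x, t')) (fderiv ℝ F (x, t) (0, 1)) t := by
  have h1 : HasDerivAt (fun t' : ℝ => (x, t')) ((0:ℝ), (1:ℝ)) t :=
    (hasDerivAt_const t x).prodMk (hasDerivAt_id t)
  exact hF.hasFDerivAt.comp_hasDerivAt t h1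

private lemma bs_diffAt (hv : ContDiffOn ℝ (⊤ : ℕ∞) (uncurry v) ((Ioi (0:ℝ)) ×ˢ (Ioi (0:ℝ))))
    (hx : 0 < x) (ht : 0 < t) : DifferentiableAt ℝ (uncurry v) (x, t) :=
  (hv.contDiffAt (bsOpen.mem_nhds (bs_mem hx ht))).differentiableAt (by simp)

private lemma pdx_hasDerivAt (hv : ContDiffOn ℝ (⊤ : ℕ∞) (uncurry v) ((Ioi (0:ℝ)) ×ˢ (Ioi (0:ℝ))))
    (hx : 0 < x) (ht : 0 < t) : HasDerivAt (fun x' => v x' t) (pdx v x t) x := by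
  have h : HasDerivAt (fun x' => v x' t) (fderiv ℝ (uncurry v) (x, t) (1, 0)) x :=
    bs_hx (bs_diffAt hv hx ht)
  have h2 : pdx v x t = fderiv ℝ (uncurry v) (x, t) (1, 0) := h.deriv
  rw [h2]; exact h

private lemma pdt_hasDerivAt (hv : ContDiffOn ℝ (⊤ : ℕ∞) (uncurry v) ((Ioi (0:ℝ)) ×ˢ (Ioi (0:ℝ))))
    (hx : 0 < x) (ht : 0 < t) : HasDerivAt (fun t' => v x t') (pdt v x t) t := by
  have h : HasDerivAt (fun t' => v x t') (fderiv ℝ (uncurry v) (x, t) (0, 1)) t :=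
    bs_ht (bs_diffAt hv hx ht)
  have h2 : pdt v x t = fderiv ℝ (uncurry v) (x, t) (0, 1) := h.deriv
  rw [h2]; exact h

private lemma pdx_smooth (hv : ContDiffOn ℝ (⊤ : ℕ∞) (uncurry v) ((Ioi (0:ℝ)) ×ˢ (Ioi (0:ℝ)))) :
    ContDiffOn ℝ (⊤ : ℕ∞) (uncurry (pdx v)) ((Ioi (0:ℝ)) ×ˢ (Ioi (0:ℝ))) := by
  have hA : ContDiffOn ℝ (⊤ : ℕ∞) (fderiv ℝ (uncurry v)) ((Ioi (0:ℝ)) ×ˢ (Ioi (0:ℝ))) :=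
    hv.fderiv_of_isOpen bsOpen (by simp)
  have h1 : ContDiffOn ℝ (⊤ : ℕ∞) (fun p : ℝ × ℝ => fderiv ℝ (uncurry v) p (1, 0))
      ((Ioi (0:ℝ)) ×ˢ (Ioi (0:ℝ))) := hA.clm_apply contDiffOn_const
  refine h1.congr fun p hp => ?_
  exact (bs_hx (x := p.1) (t := p.2) (bs_diffAt hv hp.1 hp.2)).deriv

private lemma pdt_smooth (hv : ContDiffOn ℝ (⊤ : ℕ∞) (uncurry v) ((Ioi (0:ℝ)) ×ˢ (Ioi (0:ℝ)))) :
    ContDiffOn ℝ (⊤ : ℕ∞) (uncurry (pdt v)) ((Ioi (0:ℝ)) ×ˢ (Ioi (0:ℝ))) := by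
  have hA : ContDiffOn ℝ (⊤ : ℕ∞) (fderiv ℝ (uncurry v)) ((Ioi (0:ℝ)) ×ˢ (Ioi (0:ℝ))) :=
    hv.fderiv_of_isOpen bsOpen (by simp)
  have h1 : ContDiffOn ℝ (⊤ : ℕ∞) (fun p : ℝ × ℝ => fderiv ℝ (uncurry v) p (0, 1))
      ((Ioi (0:ℝ)) ×ˢ (Ioi (0:ℝ))) := hA.clm_apply contDiffOn_const
  refine h1.congr fun p hp => ?_
  exact (bs_ht (x := p.1) (t := p.2) (bs_diffAt hv hp.1 hp.2)).deriv

private lemma pdx_congr_fun {f g : ℝ → ℝ → ℝ} (h : ∀ x', 0 < x' → f x' t = g x' t)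
    (hx : 0 < x) : pdx f x t = pdx g x t := by
  apply Filter.EventuallyEq.deriv_eq
  filter_upwards [Ioi_mem_nhds hx] with x' hx' using h x' hx'

private lemma bs_clairaut (hv : ContDiffOn ℝ (⊤ : ℕ∞) (uncurry v) ((Ioi (0:ℝ)) ×ˢ (Ioi (0:ℝ))))
    (hx : 0 < x) (ht : 0 < t) : pdt (pdx v) x t = pdx (pdt v) x t := by
  have hmem := bsOpen.mem_nhds (bs_mem hx ht)
  have hA : ContDiffOn ℝ (⊤ : ℕ∞) (fderiv ℝ (uncurry v)) ((Ioi (0:ℝ)) ×ˢ (Ioi (0:ℝ))) :=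
    hv.fderiv_of_isOpen bsOpen (by simp)
  have hA' : DifferentiableAt ℝ (fderiv ℝ (uncurry v)) (x, t) :=
    (hA.contDiffAt hmem).differentiableAt (by simp)
  have hsym := (hv.contDiffAt hmem).isSymmSndFDerivAt (by rw [minSmoothness_of_isRCLikeNormedField]; exact WithTop.coe_le_coe.mpr le_top)
  -- LHS
  have e1 : pdt (pdx v) x t = deriv (fun t' => fderiv ℝ (uncurry v) (x, t') (1, 0)) t := by
    apply Filter.EventuallyEq.deriv_eq
    filter_upwards [Ioi_mem_nhds ht] with t' ht'
    exact (bs_hx (bs_diffAt hv hx ht')).deriv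
  have e2 : pdx (pdt v) x t = deriv (fun x' => fderiv ℝ (uncurry v) (x', t) (0, 1)) x := by
    apply Filter.EventuallyEq.deriv_eq
    filter_upwards [Ioi_mem_nhds hx] with x' hx'
    exact (bs_ht (bs_diffAt hv hx' ht)).deriv
  have d1 : DifferentiableAt ℝ (fun p : ℝ × ℝ => fderiv ℝ (uncurry v) p ((1:ℝ), (0:ℝ))) (x, t) :=
    hA'.clm_apply (differentiableAt_const _)
  have d2 : DifferentiableAt ℝ (fun p : ℝ × ℝ => fderiv ℝ (uncurry v) p ((0:ℝ), (1:ℝ))) (x, t) :=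
    hA'.clm_apply (differentiableAt_const _)
  have f1 : fderiv ℝ (fun p : ℝ × ℝ => fderiv ℝ (uncurry v) p ((1:ℝ), (0:ℝ))) (x, t) =
      (fderiv ℝ (fderiv ℝ (uncurry v)) (x, t)).flip ((1:ℝ), (0:ℝ)) := by
    rw [fderiv_clm_apply hA' (differentiableAt_const _)]
    simp
  have f2 : fderiv ℝ (fun p : ℝ × ℝ => fderiv ℝ (uncurry v) p ((0:ℝ), (1:ℝ))) (x, t) =
      (fderiv ℝ (fderiv ℝ (uncurry v)) (x, t)).flip ((0:ℝ), (1:ℝ)) := by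
    rw [fderiv_clm_apply hA' (differentiableAt_const _)]
    simp
  rw [e1, e2, (bs_ht d1).deriv, (bs_hx d2).deriv, f1, f2]
  exact hsym _ _
theorem stmt19 (σ r : ℝ) (hσ : 0 < σ)
    (u : ℝ → ℝ → ℝ)
    (hu : ContDiffOn ℝ (⊤ : ℕ∞) (Function.uncurry u) (Set.Ioi (0 : ℝ) ×ˢ Set.Ioi (0 : ℝ)))
    (hsol : ∀ x : ℝ, 0 < x → ∀ t : ℝ, 0 < t →
      pdt u x t + (1 / 2) * σ ^ 2 * x ^ 2 * pdxx u x t + r * x * pdx u x t - r * u x t = 0) :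
    ∀ x : ℝ, 0 < x → ∀ t : ℝ, 0 < t →
      pdt (fun x' t' => 2 * t' * pdt u x' t'
            + (Real.log x' + (r - σ ^ 2 / 2) * t') * x' * pdx u x' t'
            - 2 * r * t' * u x' t') x t
      + (1 / 2) * σ ^ 2 * x ^ 2 * pdxx (fun x' t' => 2 * t' * pdt u x' t'
            + (Real.log x' + (r - σ ^ 2 / 2) * t') * x' * pdx u x' t'
            - 2 * r * t' * u x' t') x t
      + r * x * pdx (fun x' t' => 2 * t' * pdt u x' t'
            + (Real.log x' + (r - σ ^ 2 / 2) * t') * x' * pdx u x' t'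
            - 2 * r * t' * u x' t') x t
      - r * (2 * t * pdt u x t + (Real.log x + (r - σ ^ 2 / 2) * t) * x * pdx u x t
            - 2 * r * t * u x t)
      = 0 := by
  intro x hx t ht
  -- smoothness of the various derivatives
  have sA : ContDiffOn ℝ (⊤ : ℕ∞) (uncurry (pdt u)) (Set.Ioi (0:ℝ) ×ˢ Set.Ioi (0:ℝ)) := pdt_smooth hu
  have sB : ContDiffOn ℝ (⊤ : ℕ∞) (uncurry (pdx u)) (Set.Ioi (0:ℝ) ×ˢ Set.Ioi (0:ℝ)) := pdx_smooth hu
  have sM : ContDiffOn ℝ (⊤ : ℕ∞) (uncurry (pdx (pdt u))) (Set.Ioi (0:ℝ) ×ˢ Set.Ioi (0:ℝ)) :=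
    pdx_smooth sA
  have sC : ContDiffOn ℝ (⊤ : ℕ∞) (uncurry (pdxx u)) (Set.Ioi (0:ℝ) ×ˢ Set.Ioi (0:ℝ)) :=
    pdx_smooth sB
  -- t-direction slice derivatives at (x, t)
  have dtA : HasDerivAt (fun t' => pdt u x t') (pdt (pdt u) x t) t := pdt_hasDerivAt sA hx ht
  have dtB : HasDerivAt (fun t' => pdx u x t') (pdt (pdx u) x t) t := pdt_hasDerivAt sB hx ht
  have dtC : HasDerivAt (fun t' => pdxx u x t') (pdt (pdxx u) x t) t := pdt_hasDerivAt sC hx ht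
  have dtU : HasDerivAt (fun t' => u x t') (pdt u x t) t := pdt_hasDerivAt hu hx ht
  -- x-direction slice derivatives at (x, t)
  have dxA : HasDerivAt (fun x' => pdt u x' t) (pdx (pdt u) x t) x := pdx_hasDerivAt sA hx ht
  have dxB : HasDerivAt (fun x' => pdx u x' t) (pdxx u x t) x := pdx_hasDerivAt sB hx ht
  have dxC : HasDerivAt (fun x' => pdxx u x' t) (pdx (pdxx u) x t) x := pdx_hasDerivAt sC hx ht
  have dxU : HasDerivAt (fun x' => u x' t) (pdx u x t) x := pdx_hasDerivAt hu hx ht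
  have dxM : HasDerivAt (fun x' => pdx (pdt u) x' t) (pdx (pdx (pdt u)) x t) x :=
    pdx_hasDerivAt sM hx ht
  -- time derivative of w
  have hdWt := ((((hasDerivAt_id t).const_mul 2).mul dtA).add
      (((((hasDerivAt_id t).const_mul (r - σ ^ 2 / 2)).const_add (Real.log x)).mul_const
        x).mul dtB)).sub (((hasDerivAt_id t).const_mul (2 * r)).mul dtU)
  have hWt : pdt (fun x' t' => 2 * t' * pdt u x' t'
            + (Real.log x' + (r - σ ^ 2 / 2) * t') * x' * pdx u x' t'
            - 2 * r * t' * u x' t') x t = _ := hdWt.deriv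
  -- space derivative of w, at every point
  have hWxC : ∀ y, 0 < y → pdx (fun x' t' => 2 * t' * pdt u x' t'
            + (Real.log x' + (r - σ ^ 2 / 2) * t') * x' * pdx u x' t'
            - 2 * r * t' * u x' t') y t
      = 2 * t * pdx (pdt u) y t + (1 + Real.log y + (r - σ ^ 2 / 2) * t) * pdx u y t
        + (Real.log y + (r - σ ^ 2 / 2) * t) * y * pdxx u y t - 2 * r * t * pdx u y t := by
    intro y hy
    have dyA : HasDerivAt (fun x' => pdt u x' t) (pdx (pdt u) y t) y := pdx_hasDerivAt sA hy ht
    have dyB : HasDerivAt (fun x' => pdx u x' t) (pdxx u y t) y := pdx_hasDerivAt sB hy ht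
    have dyU : HasDerivAt (fun x' => u x' t) (pdx u y t) y := pdx_hasDerivAt hu hy ht
    have hd := ((dyA.const_mul (2 * t)).add
        ((((Real.hasDerivAt_log hy.ne').add_const ((r - σ ^ 2 / 2) * t)).mul
          (hasDerivAt_id y)).mul dyB)).sub (dyU.const_mul (2 * r * t))
    have h2 : pdx (fun x' t' => 2 * t' * pdt u x' t'
            + (Real.log x' + (r - σ ^ 2 / 2) * t') * x' * pdx u x' t'
            - 2 * r * t' * u x' t') y t = _ := hd.deriv
    rw [h2]
    simp only [Pi.mul_apply, id_eq]
    field_simp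
    ring
  -- second space derivative of w
  have heq : (fun x' => pdx (fun x' t' => 2 * t' * pdt u x' t'
            + (Real.log x' + (r - σ ^ 2 / 2) * t') * x' * pdx u x' t'
            - 2 * r * t' * u x' t') x' t)
      =ᶠ[nhds x] (fun x' => 2 * t * pdx (pdt u) x' t
        + (1 + Real.log x' + (r - σ ^ 2 / 2) * t) * pdx u x' t
        + (Real.log x' + (r - σ ^ 2 / 2) * t) * x' * pdxx u x' t
        - 2 * r * t * pdx u x' t) := by
    filter_upwards [Ioi_mem_nhds hx] with y hy using hWxC y hy
  have hd2 := (((dxM.const_mul (2 * t)).add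
      ((((Real.hasDerivAt_log hx.ne').const_add 1).add_const ((r - σ ^ 2 / 2) * t)).mul
        dxB)).add
      ((((Real.hasDerivAt_log hx.ne').add_const ((r - σ ^ 2 / 2) * t)).mul
        (hasDerivAt_id x)).mul dxC)).sub (dxB.const_mul (2 * r * t))
  have hWxx : pdxx (fun x' t' => 2 * t' * pdt u x' t'
            + (Real.log x' + (r - σ ^ 2 / 2) * t') * x' * pdx u x' t'
            - 2 * r * t' * u x' t') x t = _ := (heq.deriv_eq).trans hd2.deriv
  -- the equation differentiated in time
  have hdEt := ((dtA.add (dtC.const_mul (1 / 2 * σ ^ 2 * x ^ 2))).add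
      (dtB.const_mul (r * x))).sub (dtU.const_mul r)
  have h0t : deriv (fun t' => pdt u x t' + 1 / 2 * σ ^ 2 * x ^ 2 * pdxx u x t'
      + r * x * pdx u x t' - r * u x t') t = 0 := by
      have heq0 : (fun t' => pdt u x t' + 1 / 2 * σ ^ 2 * x ^ 2 * pdxx u x t'
          + r * x * pdx u x t' - r * u x t') =ᶠ[nhds t] fun _ => (0:ℝ) := by
        filter_upwards [Ioi_mem_nhds ht] with t' ht' using hsol x hx t' ht'
      rw [heq0.deriv_eq]; simp
  have hEt : _ = (0:ℝ) := hdEt.deriv.symm.trans h0t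
  -- the equation differentiated in space
  have hdEx := ((dxA.add (((hasDerivAt_pow 2 x).const_mul (1 / 2 * σ ^ 2)).mul dxC)).add
      (((hasDerivAt_id x).const_mul r).mul dxB)).sub (dxU.const_mul r)
  have h0x : deriv (fun x' => pdt u x' t + 1 / 2 * σ ^ 2 * x' ^ 2 * pdxx u x' t
        + r * x' * pdx u x' t - r * u x' t) x = 0 := by
      have heq0 : (fun x' => pdt u x' t + 1 / 2 * σ ^ 2 * x' ^ 2 * pdxx u x' t
          + r * x' * pdx u x' t - r * u x' t) =ᶠ[nhds x] fun _ => (0:ℝ) := by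
        filter_upwards [Ioi_mem_nhds hx] with x' hx' using hsol x' hx' t ht
      rw [heq0.deriv_eq]; simp
  have hEx : _ = (0:ℝ) := hdEx.deriv.symm.trans h0x
  -- Clairaut
  have C1 : pdt (pdx u) x t = pdx (pdt u) x t := bs_clairaut hu hx ht
  have C2 : pdt (pdxx u) x t = pdx (pdx (pdt u)) x t := by
    have h1 : pdt (pdxx u) x t = pdx (pdt (pdx u)) x t := bs_clairaut sB hx ht
    have h2 : pdx (pdt (pdx u)) x t = pdx (pdx (pdt u)) x t :=
      pdx_congr_fun (fun y hy => bs_clairaut hu hy ht) hx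
    exact h1.trans h2
  have hE := hsol x hx t ht
  simp only [id_eq, Pi.mul_apply] at hWt hWxx hEt hEx
  rw [hWt, hWxx, hWxC x hx]
  rw [C1] at hEt ⊢
  rw [C2] at hEt
  have hinv : x⁻¹ * x = 1 := inv_mul_cancel₀ hx.ne'
  linear_combination 2 * t * hEt + (Real.log x + (r - σ ^ 2 / 2) * t) * x * hEx
    + (2 - 2 * r * t) * hE
    + (1 / 2 * σ ^ 2 * x * pdx u x t + 1 / 2 * σ ^ 2 * x ^ 2 * pdxx u x t) * hinv
end
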